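/- arXiv:1103.2825 — 4 statements merged into one kernel-verified Lean document; each statement's English description precedes it below -/
import Mathlib

section
/- The matrices B = [[0, s], [t, 1 - st]] and P = [[0, z], [z^{-1}, 0]] over ℤ[s^{±1}, t^{±1}, z^{±1}] satisfy the three mixed Yang–Baxter equations: P₁₂ P₂₃ B₁₂ = B₂₃ P₁₂ P₂₃, P₁₂ B₂₃ P₁₂ = P₂₃ B₁₂ P₂₃, and B₁₂ P₂₃ P₁₂ = P₂₃ P₁₂ B₂₃, where for a 2×2 matrix M, M₁₂ (resp. M₂₃) denotes the 3×3 matrix over R acting by M on coordinates (1,2) (resp. (2,3)) of R³ and by the identity on the remaining coordinate. -/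
/-! Write `P = [[0, z], [w, 0]]`. Both `P₁₂ P₂₃` and `P₂₃ P₁₂` are a cyclic permutation
matrix of the three coordinates, scaled by one common factor (`w`, resp. `z`) on the two
coordinates where `M₁₂`, resp. `M₂₃`, acts; so conjugation by them carries `M₁₂` to `M₂₃` for
every `2 × 2` matrix `M`, whatever `z` and `w` are. Conjugating `M₂₃` by `P₁₂` and `M₁₂` by
`P₂₃` both move `M` to the coordinates `(1, 3)` with the same off-diagonal entries, but the
diagonal entries differ by the factor `z w`, so the middle relation holds once `z w = 1`. -/

open LaurentPolynomial

/-- `ℤ[s^{±1}, t^{±1}, z^{±1}]`: `s` outer, then `t`, then `z` innermost. -/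
noncomputable abbrev R₂ : Type :=
  LaurentPolynomial (LaurentPolynomial (LaurentPolynomial ℤ))

noncomputable def s₂ : R₂ := T 1
noncomputable def t₂ : R₂ := C (T 1)
noncomputable def z₂ : R₂ := C (C (T 1))
noncomputable def z₂inv : R₂ := C (C (T (-1)))

noncomputable def m12 (M : Matrix (Fin 2) (Fin 2) R₂) : Matrix (Fin 3) (Fin 3) R₂ :=
  !![M 0 0, M 0 1, 0; M 1 0, M 1 1, 0; 0, 0, 1]

noncomputable def m23 (M : Matrix (Fin 2) (Fin 2) R₂) : Matrix (Fin 3) (Fin 3) R₂ :=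
  !![1, 0, 0; 0, M 0 0, M 0 1; 0, M 1 0, M 1 1]

noncomputable def B₂ : Matrix (Fin 2) (Fin 2) R₂ := !![0, s₂; t₂, 1 - s₂ * t₂]

noncomputable def P₂ : Matrix (Fin 2) (Fin 2) R₂ := !![0, z₂; z₂inv, 0]

section AntidiagonalFlip

variable (M : Matrix (Fin 2) (Fin 2) R₂) (z w : R₂)

theorem m12_antidiag_mul_m23_antidiag_mul_m12 :
    m12 !![0, z; w, 0] * m23 !![0, z; w, 0] * m12 M =
      m23 M * m12 !![0, z; w, 0] * m23 !![0, z; w, 0] := by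
  ext i j : 1
  fin_cases i <;> fin_cases j <;> simp [m12, m23, Matrix.mul_apply, Fin.sum_univ_three] <;> ring

theorem m12_antidiag_mul_m23_mul_m12_antidiag (h : z * w = 1) :
    m12 !![0, z; w, 0] * m23 M * m12 !![0, z; w, 0] =
      m23 !![0, z; w, 0] * m12 M * m23 !![0, z; w, 0] := by
  ext i j : 1
  fin_cases i <;> fin_cases j <;> simp [m12, m23, Matrix.mul_apply, Fin.sum_univ_three] <;> grind

theorem m12_mul_m23_antidiag_mul_m12_antidiag :
    m12 M * m23 !![0, z; w, 0] * m12 !![0, z; w, 0] =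
      m23 !![0, z; w, 0] * m12 !![0, z; w, 0] * m23 M := by
  ext i j : 1
  fin_cases i <;> fin_cases j <;> simp [m12, m23, Matrix.mul_apply, Fin.sum_univ_three] <;> ring

end AntidiagonalFlip

theorem z₂_mul_z₂inv : z₂ * z₂inv = 1 := by
  rw [z₂, z₂inv, ← map_mul, ← map_mul, ← T_add, add_neg_cancel, T_zero, map_one, map_one]

theorem stmt_2 :
    m12 P₂ * m23 P₂ * m12 B₂ = m23 B₂ * m12 P₂ * m23 P₂ ∧
    m12 P₂ * m23 B₂ * m12 P₂ = m23 P₂ * m12 B₂ * m23 P₂ ∧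
    m12 B₂ * m23 P₂ * m12 P₂ = m23 P₂ * m12 P₂ * m23 B₂ :=
  ⟨m12_antidiag_mul_m23_antidiag_mul_m12 B₂ z₂ z₂inv,
    m12_antidiag_mul_m23_mul_m12_antidiag B₂ z₂ z₂inv z₂_mul_z₂inv,
    m12_mul_m23_antidiag_mul_m12_antidiag B₂ z₂ z₂inv⟩
end

section
/- If a double-occurrence word contains two labels u, v occurring as consecutive pairs in the pattern ...u v ... v u... (a Reidemeister-II configuration: the occurrences are at positions i, i+1 and j, j+1 with the word reading u v at positions i,i+1 and v u at positions j,j+1), then u and v have the same parity (both odd or both even). -/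
/-! Each of `u`, `v` occurs exactly twice in `l₁ ++ [u, v] ++ l₂ ++ [v, u] ++ l₃`: the symbols
strictly between the two `v`s are `l₂`, and those between the two `u`s are `v :: l₂ ++ [v]`.
The two gaps differ by 2, so they have the same parity. -/

def OddLabel {α : Type*} (l : List α) (v : α) : Prop :=
  ∃ i j : ℕ, i < j ∧ l[i]? = some v ∧ l[j]? = some v ∧ Odd (j - i - 1)

section OddLabel

variable {α : Type*}

theorem oddLabel_iff_of_getElem?_eq_some_iff {l : List α} {x : α} {p q : ℕ} (hpq : p < q)
    (hpos : ∀ i, l[i]? = some x ↔ i = p ∨ i = q) :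
    OddLabel l x ↔ Odd (q - p - 1) := by
  constructor
  · rintro ⟨i, j, hij, hi, hj, hodd⟩
    obtain rfl | rfl := (hpos i).1 hi <;> obtain rfl | rfl := (hpos j).1 hj <;>
      first | exact hodd | omega
  · exact fun hodd => ⟨p, q, hpq, (hpos p).2 (.inl rfl), (hpos q).2 (.inr rfl), hodd⟩

theorem List.getElem?_append_cons_eq_some_iff {l₁ l₂ : List α} {x : α} (hx : x ∉ l₁)
    (i : ℕ) :
    (l₁ ++ x :: l₂)[i]? = some x ↔
      i = l₁.length ∨ ∃ k, i = l₁.length + 1 + k ∧ l₂[k]? = some x := by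
  rcases lt_trichotomy i l₁.length with hi | rfl | hi
  · rw [List.getElem?_append_left hi]
    exact iff_of_false (fun h => hx (List.mem_of_getElem? h)) (by omega)
  · simp
  · obtain ⟨k, rfl⟩ := Nat.exists_eq_add_of_lt hi
    rw [List.getElem?_append_right hi.le, show l₁.length + k + 1 - l₁.length = k + 1 by omega]
    simp only [List.getElem?_cons_succ]
    constructor
    · exact fun h => .inr ⟨k, by omega, h⟩
    · rintro (h | ⟨k', hk', h⟩)
      · omega
      · rwa [show k = k' by omega]

theorem oddLabel_append_singleton_append {l₁ m l₃ : List α} {x : α}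
    (h₁ : x ∉ l₁) (hm : x ∉ m) (h₃ : x ∉ l₃) :
    OddLabel (l₁ ++ [x] ++ m ++ [x] ++ l₃) x ↔ Odd m.length := by
  have hpos : ∀ i, (l₁ ++ [x] ++ m ++ [x] ++ l₃)[i]? = some x ↔
      i = l₁.length ∨ i = l₁.length + m.length + 1 := by
    intro i
    have hword : l₁ ++ [x] ++ m ++ [x] ++ l₃ = l₁ ++ x :: (m ++ x :: l₃) := by simp
    simp only [hword, List.getElem?_append_cons_eq_some_iff h₁,
      List.getElem?_append_cons_eq_some_iff hm]
    constructor
    · rintro (h | ⟨k, rfl, h | ⟨k', rfl, h⟩⟩)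
      · exact .inl h
      · exact .inr (by omega)
      · exact absurd (List.mem_of_getElem? h) h₃
    · rintro (h | rfl)
      · exact .inl h
      · exact .inr ⟨m.length, by omega, .inl rfl⟩
  rw [oddLabel_iff_of_getElem?_eq_some_iff (by omega) hpos]
  congr! 1
  omega

end OddLabel

theorem stmt_8_general {α : Type*} (l₁ l₂ l₃ : List α) (u v : α)
    (huv : u ≠ v)
    (hu : u ∉ l₁ ++ l₂ ++ l₃) (hv : v ∉ l₁ ++ l₂ ++ l₃) :
    (OddLabel (l₁ ++ [u, v] ++ l₂ ++ [v, u] ++ l₃) u ↔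
      OddLabel (l₁ ++ [u, v] ++ l₂ ++ [v, u] ++ l₃) v) := by
  simp only [List.mem_append, not_or] at hu hv
  have hword_u : l₁ ++ [u, v] ++ l₂ ++ [v, u] ++ l₃ =
      l₁ ++ [u] ++ (v :: l₂ ++ [v]) ++ [u] ++ l₃ := by simp
  have hword_v : l₁ ++ [u, v] ++ l₂ ++ [v, u] ++ l₃ =
      (l₁ ++ [u]) ++ [v] ++ l₂ ++ [v] ++ u :: l₃ := by simp
  have hu_mid : u ∉ v :: l₂ ++ [v] := by simp [huv, hu.1.2]
  rw [hword_u, oddLabel_append_singleton_append hu.1.1 hu_mid hu.2, ← hword_u, hword_v,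
    oddLabel_append_singleton_append (by simp [hv.1.1, huv.symm]) hv.1.2 (by simp [hv.2, huv.symm])]
  simp [Nat.odd_add_one]

theorem stmt_8 {α : Type*} [DecidableEq α] (l₁ l₂ l₃ : List α) (u v : α)
    (huv : u ≠ v)
    (hu : u ∉ l₁ ++ l₂ ++ l₃) (hv : v ∉ l₁ ++ l₂ ++ l₃)
    (hcount : ∀ x ∈ l₁ ++ l₂ ++ l₃, (l₁ ++ l₂ ++ l₃).count x = 2) :
    (OddLabel (l₁ ++ [u, v] ++ l₂ ++ [v, u] ++ l₃) u ↔
      OddLabel (l₁ ++ [u, v] ++ l₂ ++ [v, u] ++ l₃) v) :=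
  stmt_8_general l₁ l₂ l₃ u v huv hu hv
end

section
/- The z-Parity Alexander relation matrix of virtual knot 3.1 has determinant equal (up to sign/unit) to (1/(st) - 1)z^{-2} - 1/(st) + 1; in particular the maximal |z|-exponent is 2, so by the degree-bound lemma any diagram of 3.1 has at least 2 odd crossings. -/
open LaurentPolynomial

/-- `ℤ[s^{±1}, t^{±1}, z^{±1}]`: `s` outer, then `t`, then `z` innermost. -/
noncomputable abbrev R₁₆ : Type :=
  LaurentPolynomial (LaurentPolynomial (LaurentPolynomial ℤ))

noncomputable def s : R₁₆ := T 1
noncomputable def sinv : R₁₆ := T (-1)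
noncomputable def t : R₁₆ := C (T 1)
noncomputable def tinv : R₁₆ := C (T (-1))
noncomputable def z : R₁₆ := C (C (T 1))
noncomputable def zinv : R₁₆ := C (C (T (-1)))

/-- The monomial s^a t^b z^c with integer exponents. -/
noncomputable def mono (a b c : ℤ) : R₁₆ := T a * C (T b) * C (C (T c))

-- Rows: the relations a = z⁻¹f, b = s⁻¹a, c = zb, d = zc, e = t⁻¹d + (1 - s⁻¹t⁻¹)a,
-- f = z⁻¹e, written as `Σ coeff • generator = 0` in the basis a, …, f.
noncomputable def M₁₆ : Matrix (Fin 6) (Fin 6) R₁₆ :=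
  !![-1, 0, 0, 0, 0, zinv;
     sinv, -1, 0, 0, 0, 0;
     0, z, -1, 0, 0, 0;
     0, 0, z, -1, 0, 0;
     1 - sinv * tinv, 0, 0, tinv, -1, 0;
     0, 0, 0, 0, zinv, -1]

-- Only three permutations contribute: the identity, the 3-cycle `0 → 5 → 4 → 0` through the
-- chord entry `u`, and the 6-cycle through the off-diagonal entries.
theorem Matrix.det_six_cycle_add_chord {R : Type*} [CommRing R] (α β γ δ ε ζ u : R) :
    !![(-1 : R), 0, 0, 0, 0, α; β, -1, 0, 0, 0, 0; 0, γ, -1, 0, 0, 0;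
        0, 0, δ, -1, 0, 0; u, 0, 0, ε, -1, 0; 0, 0, 0, 0, ζ, -1].det
      = 1 - α * ζ * u - α * β * γ * δ * ε * ζ := by
  simp only [det_succ_row_zero, Fin.sum_univ_succ, det_unique, Finset.univ_unique,
    Finset.sum_singleton, submatrix_apply, Fin.succAbove, of_apply, cons_val', cons_val_fin_one,
    cons_val_zero, cons_val_succ, cons_val_one, cons_val, Fin.val_succ, Fin.val_zero, pow_succ, pow_zero,
    Fin.default_eq_zero, submatrix_submatrix, Function.comp_apply, Fin.reduceLT, Fin.lt_one_iff,
    Fin.reduceCastSucc, Fin.reduceSucc, Fin.castSucc_zero, Fin.succ_pos, not_lt_zero, lt_self_iff_false,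
    Fin.succ_zero_eq_one, Fin.succ_one_eq_two, Fin.castSucc_one, Fin.castSucc_succ, ↓reduceIte,
    Fin.reduceEq, Fin.isValue]
  ring

theorem z_mul_zinv : z * zinv = 1 := by
  simp only [z, zinv, ← map_mul, ← T_add, add_neg_cancel, T_zero, map_one]

theorem mono_zero : mono 0 0 0 = 1 := by
  simp [mono, T_zero]

theorem stmt_16 :
    ∃ a b c : ℤ,
      M₁₆.det = mono a b c * ((sinv * tinv - 1) * zinv ^ 2 - sinv * tinv + 1) ∨
      M₁₆.det = -(mono a b c * ((sinv * tinv - 1) * zinv ^ 2 - sinv * tinv + 1)) := by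
  refine ⟨0, 0, 0, Or.inl ?_⟩
  rw [mono_zero, one_mul, M₁₆, Matrix.det_six_cycle_add_chord]
  -- the 6-cycle term is `s⁻¹t⁻¹(z z⁻¹)²`, which collapses to `s⁻¹t⁻¹`
  linear_combination (-(sinv * tinv) * (z * zinv + 1)) * z_mul_zinv
end

section
/- Reidemeister-II stability of parity: inserting into a double-occurrence word two fresh labels u, v as adjacent pairs (u v) at one position and (v u) at another position preserves the parity of every existing label, and u, v receive equal parities. -/
section

variable {α : Type*} {x : α} {A B C : List α}

namespace List

theorem getElem?_append_append_eq_some_iff (hx : x ∉ B) {k : ℕ} :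
    (A ++ B ++ C)[k]? = some x ↔
      ∃ k', (A ++ C)[k']? = some x ∧ k = if k' < A.length then k' else k' + B.length := by
  simp only [getElem?_append, length_append]
  constructor
  · intro h
    split_ifs at h with h₁ h₂
    · exact ⟨k, by rwa [if_pos h₂], by rw [if_pos h₂]⟩
    · exact absurd (mem_of_getElem? h) hx
    · refine ⟨k - B.length, ?_, ?_⟩
      · rw [if_neg (by omega), ← h]; congr 1; omega
      · rw [if_neg (by omega)]; omega
  · rintro ⟨k', h, rfl⟩
    split_ifs at h ⊢ <;> first | omega | (try rw [← h]); (congr 1; omega)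

theorem getElem?_append_cons_append_cons_eq_self_iff (hA : x ∉ A) (hB : x ∉ B) (hC : x ∉ C)
    {k : ℕ} :
    (A ++ x :: B ++ x :: C)[k]? = some x ↔ k = A.length ∨ k = A.length + B.length + 1 := by
  simp only [getElem?_append, length_append, length_cons, getElem?_cons]
  constructor
  · intro h
    split_ifs at h <;> first | omega | exact absurd (mem_of_getElem? h) ‹_›
  · rintro (rfl | rfl) <;> split_ifs <;> first | omega | rfl

end List

namespace OddLabel

theorem append_append_iff (hx : x ∉ B) (hB : Even B.length) :
    OddLabel (A ++ B ++ C) x ↔ OddLabel (A ++ C) x := by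
  obtain ⟨b, hb⟩ := hB
  simp only [OddLabel, Nat.odd_iff, List.getElem?_append_append_eq_some_iff hx]
  constructor
  · rintro ⟨_, _, hij, ⟨i, hi, rfl⟩, ⟨j, hj, rfl⟩, hodd⟩
    refine ⟨i, j, ?_, hi, hj, ?_⟩ <;> split_ifs at hij hodd <;> omega
  · rintro ⟨i, j, hij, hi, hj, hodd⟩
    refine ⟨_, _, ?_, ⟨i, hi, rfl⟩, ⟨j, hj, rfl⟩, ?_⟩ <;> split_ifs <;> omega

theorem append_cons_append_cons_self_iff (hA : x ∉ A) (hB : x ∉ B) (hC : x ∉ C) :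
    OddLabel (A ++ x :: B ++ x :: C) x ↔ Odd B.length := by
  simp only [OddLabel, List.getElem?_append_cons_append_cons_eq_self_iff hA hB hC]
  have hgap : A.length + B.length + 1 - A.length - 1 = B.length := by omega
  constructor
  · rintro ⟨i, j, hij, hi, hj, hodd⟩
    obtain ⟨rfl, rfl⟩ : i = A.length ∧ j = A.length + B.length + 1 := by omega
    rwa [hgap] at hodd
  · exact fun h ↦ ⟨_, _, by omega, .inl rfl, .inr rfl, by rwa [hgap]⟩

end OddLabel

end

theorem stmt_18_general {α : Type*} (l₁ l₂ l₃ : List α) (u v : α)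
    (huv : u ≠ v)
    (hu : u ∉ l₁ ++ l₂ ++ l₃) (hv : v ∉ l₁ ++ l₂ ++ l₃) :
    (∀ x ∈ l₁ ++ l₂ ++ l₃,
      (OddLabel (l₁ ++ [u, v] ++ l₂ ++ [v, u] ++ l₃) x ↔ OddLabel (l₁ ++ l₂ ++ l₃) x)) ∧
    (OddLabel (l₁ ++ [u, v] ++ l₂ ++ [v, u] ++ l₃) u ↔
      OddLabel (l₁ ++ [u, v] ++ l₂ ++ [v, u] ++ l₃) v) := by
  simp only [List.mem_append, not_or] at hu hv
  obtain ⟨⟨hu₁, hu₂⟩, hu₃⟩ := hu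
  obtain ⟨⟨hv₁, hv₂⟩, hv₃⟩ := hv
  refine ⟨fun x hx ↦ ?_, ?_⟩
  · have hxu : x ≠ u := by rintro rfl; simp_all
    have hxv : x ≠ v := by rintro rfl; simp_all
    calc OddLabel (l₁ ++ [u, v] ++ l₂ ++ [v, u] ++ l₃) x
        ↔ OddLabel (l₁ ++ [u, v] ++ (l₂ ++ [v, u] ++ l₃)) x := by simp only [List.append_assoc]
      _ ↔ OddLabel (l₁ ++ l₂ ++ [v, u] ++ l₃) x := by
        rw [OddLabel.append_append_iff (by simp [hxu, hxv]) even_two]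
        simp only [List.append_assoc]
      _ ↔ OddLabel (l₁ ++ l₂ ++ l₃) x := OddLabel.append_append_iff (by simp [hxu, hxv]) even_two
  · have hu' : OddLabel (l₁ ++ [u, v] ++ l₂ ++ [v, u] ++ l₃) u ↔ Odd (l₂.length + 2) := by
      rw [show l₁ ++ [u, v] ++ l₂ ++ [v, u] ++ l₃ = l₁ ++ u :: (v :: l₂ ++ [v]) ++ u :: l₃ by simp,
        OddLabel.append_cons_append_cons_self_iff hu₁ (by simp [huv, hu₂]) hu₃]
      simp
    have hv' : OddLabel (l₁ ++ [u, v] ++ l₂ ++ [v, u] ++ l₃) v ↔ Odd l₂.length := by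
      rw [show l₁ ++ [u, v] ++ l₂ ++ [v, u] ++ l₃ = l₁ ++ [u] ++ v :: l₂ ++ v :: u :: l₃ by simp]
      exact OddLabel.append_cons_append_cons_self_iff (by simp [hv₁, huv.symm]) hv₂
        (by simp [hv₃, huv.symm])
    rw [hu', hv', Nat.odd_add]
    simp

theorem stmt_18 {α : Type*} [DecidableEq α] (l₁ l₂ l₃ : List α) (u v : α)
    (huv : u ≠ v)
    (hu : u ∉ l₁ ++ l₂ ++ l₃) (hv : v ∉ l₁ ++ l₂ ++ l₃)
    (hcount : ∀ x ∈ l₁ ++ l₂ ++ l₃, (l₁ ++ l₂ ++ l₃).count x = 2) :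
    (∀ x ∈ l₁ ++ l₂ ++ l₃,
      (OddLabel (l₁ ++ [u, v] ++ l₂ ++ [v, u] ++ l₃) x ↔ OddLabel (l₁ ++ l₂ ++ l₃) x)) ∧
    (OddLabel (l₁ ++ [u, v] ++ l₂ ++ [v, u] ++ l₃) u ↔
      OddLabel (l₁ ++ [u, v] ++ l₂ ++ [v, u] ++ l₃) v) :=
  stmt_18_general l₁ l₂ l₃ u v huv hu hv
end
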